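/- arXiv:0901.0959 — 6 statements merged into one kernel-verified Lean document; each statement's English description precedes it below -/
import Mathlib

section
/- Let G be a group acting partially on a unital k-algebra A via α = ({α_g}, {D_g}), and suppose that each ideal D_g is a unital algebra, i.e. D_g = A·1_g for a central idempotent 1_g ∈ A. Then the linear map from the group algebra kG tensor A to A determined on basis elements by g · a = α_g(a·1_{g⁻¹}) is a partial action of the Hopf algebra kG on A. -/
open TensorProduct

/-!
On a basis element `g` of `kG` the conditions of a partial Hopf action are identities between
the maps `α_g`: condition (i) is multiplicativity of `α_g` on `D_{g⁻¹}`, and condition (iii)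
becomes `α_g(α_h(a 1_{h⁻¹}) 1_{g⁻¹}) = 1_g α_{gh}(a 1_{(gh)⁻¹})`. The latter follows from the
composition axiom once one knows that `α_g` sends the unit `1_{g⁻¹} 1_h` of `D_{g⁻¹} ∩ D_h` to the
unit `1_g 1_{gh}` of `D_g ∩ D_{gh}`; this holds because a multiplicative map of one unital
ideal onto another preserves units. All three conditions are linear in the elements of `kG`
involved, so it suffices to check them on the group-like basis.
-/

section CentralIdempotent

variable {A : Type*} [Semigroup A]

theorem mul_eq_self_of_mul_mul_eq_self {u w x : A} (hu : IsIdempotentElem u)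
    (hw : w ∈ Set.center A) (hx : x * (u * w) = x) : x * u = x := by
  calc x * u = x * (u * w) * u := by rw [hx]
    _ = x * (u * u * w) := by rw [mul_assoc, mul_assoc, (hw.comm u).eq, mul_assoc]
    _ = x := by rw [hu.eq, hx]

theorem map_idempotent_eq_of_image_eq {B : Type*} [Semigroup B] {f : A → B} {u : A} {v : B}
    (hu : IsIdempotentElem u) (hu_center : u ∈ Set.center A) (hv : IsIdempotentElem v)
    (hf : ∀ a b, a * u = a → b * u = b → f (a * b) = f a * f b)
    (himage : f '' {a | a * u = a} = {b | b * v = b}) : f u = v := by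
  obtain ⟨x, hx, hfx⟩ : v ∈ f '' {a | a * u = a} := himage ▸ hv.eq
  have hfu : f u * v = f u := himage.subset ⟨u, hu.eq, rfl⟩
  calc f u = f u * f x := by rw [hfx, hfu]
    _ = f (u * x) := (hf u x hu.eq hx).symm
    _ = v := by rw [(hu_center.comm x).eq, hx, hfx]

end CentralIdempotent

theorem Module.Basis.eq_mul'_map_comul {k C A ι : Type*} [CommSemiring k] [AddCommMonoid C]
    [Module k C] [Coalgebra k C] [Semiring A] [Algebra k A] (b : Module.Basis ι k C)
    (hΔ : ∀ i, Coalgebra.comul (R := k) (b i) = b i ⊗ₜ[k] b i) {φ f₁ f₂ : C →ₗ[k] A}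
    (h : ∀ i, φ (b i) = f₁ (b i) * f₂ (b i)) (c : C) :
    φ c = LinearMap.mul' k A (TensorProduct.map f₁ f₂ (Coalgebra.comul c)) :=
  LinearMap.congr_fun (b.ext (f₂ := LinearMap.mul' k A ∘ₗ TensorProduct.map f₁ f₂ ∘ₗ
    Coalgebra.comul) fun i => by simp [hΔ, h]) c

-- `D_g = {a | a * e g = a}`; only the restriction of `α g` to `D_{g⁻¹}` is meaningful.
structure UnitalPartialAction (G A : Type*) [Group G] [Monoid A] where
  e : G → A
  isIdempotentElem_e : ∀ g, IsIdempotentElem (e g)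
  e_mem_center : ∀ g, e g ∈ Set.center A
  e_one : e 1 = 1
  α : G → A → A
  α_mul_e : ∀ g a, α g a * e g = α g a
  α_mul : ∀ g a b, α g ((a * e g⁻¹) * (b * e g⁻¹)) = α g (a * e g⁻¹) * α g (b * e g⁻¹)
  image_α : ∀ g h, α g '' {a | a * (e g⁻¹ * e h) = a} = {a | a * (e g * e (g * h)) = a}
  α_α : ∀ g h x,
    α g (α h (x * (e h⁻¹ * e (g * h)⁻¹))) = α (g * h) (x * (e h⁻¹ * e (g * h)⁻¹))

namespace UnitalPartialAction

variable {G A : Type*} [Group G] [Monoid A] (P : UnitalPartialAction G A)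

theorem isIdempotentElem_e_mul (g h : G) : IsIdempotentElem (P.e g * P.e h) :=
  (P.isIdempotentElem_e g).mul_of_commute ((P.e_mem_center g).comm _)
    (P.isIdempotentElem_e h)

theorem e_mul_mem_center (g h : G) : P.e g * P.e h ∈ Set.center A :=
  Set.mul_mem_center (P.e_mem_center g) (P.e_mem_center h)

theorem α_mul_of_mul_e {g : G} {a b : A} (ha : a * P.e g⁻¹ = a) (hb : b * P.e g⁻¹ = b) :
    P.α g (a * b) = P.α g a * P.α g b := by
  simpa only [ha, hb] using P.α_mul g a b

theorem α_mul_mul_e (g : G) (a b : A) :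
    P.α g (a * b * P.e g⁻¹) = P.α g (a * P.e g⁻¹) * P.α g (b * P.e g⁻¹) := by
  rw [← P.α_mul]
  congr 1
  rw [mul_assoc a, ← ((P.e_mem_center _).comm b).eq, mul_assoc a, ← mul_assoc (P.e g⁻¹),
    (P.isIdempotentElem_e _).eq]

theorem α_e_mul_e (g h : G) : P.α g (P.e g⁻¹ * P.e h) = P.e g * P.e (g * h) :=
  map_idempotent_eq_of_image_eq (P.isIdempotentElem_e_mul _ _) (P.e_mul_mem_center _ _)
    (P.isIdempotentElem_e_mul _ _)
    (fun _ _ ha hb => P.α_mul_of_mul_e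
      (mul_eq_self_of_mul_mul_eq_self (P.isIdempotentElem_e _) (P.e_mem_center _) ha)
      (mul_eq_self_of_mul_mul_eq_self (P.isIdempotentElem_e _) (P.e_mem_center _) hb))
    (P.image_α g h)

theorem α_e_inv (g : G) : P.α g (P.e g⁻¹) = P.e g := by
  simpa [P.e_one, (P.isIdempotentElem_e _).eq] using P.α_e_mul_e g g⁻¹

theorem α_mul_e_mul_e (g h : G) (a : A) :
    P.α g (a * P.e g⁻¹) * (P.e g * P.e (g * h)) = P.α g (a * (P.e g⁻¹ * P.e h)) := by
  have hu : P.e g⁻¹ * P.e h * P.e g⁻¹ = P.e g⁻¹ * P.e h :=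
    mul_eq_self_of_mul_mul_eq_self (P.isIdempotentElem_e _) (P.e_mem_center _)
      (P.isIdempotentElem_e_mul _ _).eq
  rw [← P.α_e_mul_e, ← hu, ← P.α_mul, hu, mul_assoc, ← mul_assoc (P.e g⁻¹),
    (P.isIdempotentElem_e _).eq]

theorem α_α_mul_e (g h : G) (a : A) :
    P.α g (P.α h (a * P.e h⁻¹) * P.e g⁻¹) = P.e g * P.α (g * h) (a * P.e (g * h)⁻¹) := by
  have inner : P.α h (a * P.e h⁻¹) * P.e g⁻¹ = P.α h (a * (P.e h⁻¹ * P.e (g * h)⁻¹)) := by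
    have := P.α_mul_e_mul_e h (h⁻¹ * g⁻¹) a
    rwa [mul_inv_cancel_left, ← mul_inv_rev, ← mul_assoc, P.α_mul_e] at this
  have outer : P.e g * P.α (g * h) (a * P.e (g * h)⁻¹) =
      P.α (g * h) (a * (P.e h⁻¹ * P.e (g * h)⁻¹)) := by
    have := P.α_mul_e_mul_e (g * h) h⁻¹ a
    rwa [mul_inv_cancel_right, ← mul_assoc, P.α_mul_e, ← ((P.e_mem_center g).comm _).eq,
      ((P.e_mem_center _).comm (P.e h⁻¹)).eq] at this
  rw [inner, outer, P.α_α]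

end UnitalPartialAction

theorem group_partial_action_gives_hopf_partial_action_general
    {k A : Type*} [Field k] [Ring A] [Algebra k A] {G : Type*} [Group G]
    {KG : Type*} [Ring KG] [HopfAlgebra k KG]
    -- `KG` is the group Hopf algebra `kG`:
    (bKG : Module.Basis G k KG)
    (hb_mul : ∀ g h : G, bKG g * bKG h = bKG (g * h))
    (hb_one : bKG 1 = 1)
    (hΔ : ∀ g : G, Coalgebra.comul (R := k) (bKG g) = bKG g ⊗ₜ[k] bKG g)
    -- the central idempotents `1_g = e g` generating the unital ideals `D_g`
    (e : G → A)
    (he_idem : ∀ g : G, e g * e g = e g)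
    (he_central : ∀ (g : G) (a : A), e g * a = a * e g)
    (he_one : e 1 = 1)
    -- the partial isomorphisms `α_g : D_{g⁻¹} → D_g`
    (α : G → (A →ₗ[k] A))
    (hα_one : ∀ a : A, α 1 a = a)
    (hα_range : ∀ (g : G) (a : A), α g a = α g a * e g)
    -- `α_g` is multiplicative on `D_{g⁻¹}`
    (hα_mul : ∀ (g : G) (a b : A),
      α g ((a * e g⁻¹) * (b * e g⁻¹)) = α g (a * e g⁻¹) * α g (b * e g⁻¹))
    -- condition (ii): `α_g(D_{g⁻¹} ∩ D_h) = D_g ∩ D_{gh}`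
    (hα_ideal : ∀ g h : G,
      (fun a : A => α g a) '' {a : A | a * (e g⁻¹ * e h) = a} =
        {a : A | a * (e g * e (g * h)) = a})
    -- condition (iii): `α_g(α_h(x)) = α_{gh}(x)` for `x ∈ D_{h⁻¹} ∩ D_{(gh)⁻¹}`
    (hα_comp : ∀ (g h : G) (x : A),
      α g (α h (x * (e h⁻¹ * e (g * h)⁻¹))) = α (g * h) (x * (e h⁻¹ * e (g * h)⁻¹))) :
    -- the linear action of `kG` determined by `g · a = α_g(a·1_{g⁻¹})` ...
    ∀ act : KG →ₗ[k] A →ₗ[k] A,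
      (∀ (g : G) (a : A), act (bKG g) a = α g (a * e g⁻¹)) →
      -- ... is a partial action of the Hopf algebra `kG`:
      -- (ii) `1 · a = a`
      ((∀ a : A, act 1 a = a) ∧
      -- (i) `x · (ab) = Σ (x₁·a)(x₂·b)`
      (∀ (x : KG) (a b : A),
        act x (a * b) = LinearMap.mul' k A
          (TensorProduct.map (act.flip a) (act.flip b) (Coalgebra.comul x))) ∧
      -- (iii) `x · (y · a) = Σ (x₁·1)((x₂y)·a)`
      (∀ (x y : KG) (a : A),
        act x (act y a) = LinearMap.mul' k A
          (TensorProduct.map (act.flip 1) ((act.flip a) ∘ₗ LinearMap.mulRight k y)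
            (Coalgebra.comul x)))) := by
  intro act hact
  let P : UnitalPartialAction G A :=
    { e, α := fun g => α g
      isIdempotentElem_e := he_idem
      e_mem_center := fun g => Semigroup.mem_center_iff.mpr fun a => (he_central g a).symm
      e_one := he_one
      α_mul_e := fun g a => (hα_range g a).symm
      α_mul := hα_mul
      image_α := hα_ideal
      α_α := hα_comp }
  refine ⟨fun a => ?_, fun x a b => ?_, fun x y a => ?_⟩
  · rw [← hb_one, hact, inv_one, he_one, mul_one, hα_one]
  · refine bKG.eq_mul'_map_comul hΔ (φ := act.flip (a * b)) (fun g => ?_) x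
    simp only [LinearMap.flip_apply, hact]
    exact P.α_mul_mul_e g a b
  · have hbasis (g : G) : act (bKG g) (act y a) = act (bKG g) 1 * act (bKG g * y) a := by
      refine LinearMap.congr_fun (bKG.ext (f₁ := act (bKG g) ∘ₗ act.flip a)
        (f₂ := LinearMap.mulLeft k (act (bKG g) 1) ∘ₗ act.flip a ∘ₗ LinearMap.mulLeft k (bKG g))
        fun h => ?_) y
      simp only [LinearMap.comp_apply, LinearMap.flip_apply, LinearMap.mulLeft_apply, hb_mul,
        hact, one_mul]
      exact (P.α_α_mul_e g h a).trans (congrArg (· * _) (P.α_e_inv g).symm)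
    exact bKG.eq_mul'_map_comul hΔ (φ := act.flip (act y a)) (f₁ := act.flip 1)
      (f₂ := act.flip a ∘ₗ LinearMap.mulRight k y) hbasis x

/-- let `α = ({α_g}, {D_g})` be a partial action of a group `G` on a unital
`k`-algebra `A` in which every ideal `D_g = A·1_g` is unital, with unit a central
idempotent `1_g = e g` (so `D_g = {a : a·(e g) = a}`, and `α g` is an algebra isomorphism
from `D_{g⁻¹}` onto `D_g`, encoded as a globally defined linear map that only depends on
the `D_{g⁻¹}`-component).  Then the linear map `kG ⊗ A → A` determined on basis elements
by `g · a = α_g(a·1_{g⁻¹})` is a partial action of the group Hopf algebra `kG` on `A`.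
Here the group Hopf algebra `kG` is encoded as a Hopf algebra `KG` having a basis
`(b_g)_{g ∈ G}` of group-like elements (`Δ(b_g) = b_g ⊗ b_g`) with `b_g b_h = b_{gh}`
and `b_1 = 1`. -/
theorem group_partial_action_gives_hopf_partial_action
    {k A : Type*} [Field k] [Ring A] [Algebra k A] {G : Type*} [Group G]
    {KG : Type*} [Ring KG] [HopfAlgebra k KG]
    -- `KG` is the group Hopf algebra `kG`:
    (bKG : Module.Basis G k KG)
    (hb_mul : ∀ g h : G, bKG g * bKG h = bKG (g * h))
    (hb_one : bKG 1 = 1)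
    (hΔ : ∀ g : G, Coalgebra.comul (R := k) (bKG g) = bKG g ⊗ₜ[k] bKG g)
    -- the central idempotents `1_g = e g` generating the unital ideals `D_g`
    (e : G → A)
    (he_idem : ∀ g : G, e g * e g = e g)
    (he_central : ∀ (g : G) (a : A), e g * a = a * e g)
    (he_one : e 1 = 1)
    -- the partial isomorphisms `α_g : D_{g⁻¹} → D_g`
    (α : G → (A →ₗ[k] A))
    (hα_one : ∀ a : A, α 1 a = a)
    (hα_dom : ∀ (g : G) (a : A), α g (a * e g⁻¹) = α g a)
    (hα_range : ∀ (g : G) (a : A), α g a = α g a * e g)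
    -- `α_g` is multiplicative on `D_{g⁻¹}`
    (hα_mul : ∀ (g : G) (a b : A),
      α g ((a * e g⁻¹) * (b * e g⁻¹)) = α g (a * e g⁻¹) * α g (b * e g⁻¹))
    -- `α_g : D_{g⁻¹} → D_g` is bijective, with inverse `α_{g⁻¹}`
    (hα_inv : ∀ (g : G) (a : A), α g⁻¹ (α g (a * e g⁻¹)) = a * e g⁻¹)
    -- condition (ii): `α_g(D_{g⁻¹} ∩ D_h) = D_g ∩ D_{gh}`
    (hα_ideal : ∀ g h : G,
      (fun a : A => α g a) '' {a : A | a * (e g⁻¹ * e h) = a} =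
        {a : A | a * (e g * e (g * h)) = a})
    -- condition (iii): `α_g(α_h(x)) = α_{gh}(x)` for `x ∈ D_{h⁻¹} ∩ D_{(gh)⁻¹}`
    (hα_comp : ∀ (g h : G) (x : A),
      α g (α h (x * (e h⁻¹ * e (g * h)⁻¹))) = α (g * h) (x * (e h⁻¹ * e (g * h)⁻¹))) :
    -- the linear action of `kG` determined by `g · a = α_g(a·1_{g⁻¹})` ...
    ∀ act : KG →ₗ[k] A →ₗ[k] A,
      (∀ (g : G) (a : A), act (bKG g) a = α g (a * e g⁻¹)) →
      -- ... is a partial action of the Hopf algebra `kG`: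
      -- (ii) `1 · a = a`
      ((∀ a : A, act 1 a = a) ∧
      -- (i) `x · (ab) = Σ (x₁·a)(x₂·b)`
      (∀ (x : KG) (a b : A),
        act x (a * b) = LinearMap.mul' k A
          (TensorProduct.map (act.flip a) (act.flip b) (Coalgebra.comul x))) ∧
      -- (iii) `x · (y · a) = Σ (x₁·1)((x₂y)·a)`
      (∀ (x y : KG) (a : A),
        act x (act y a) = LinearMap.mul' k A
          (TensorProduct.map (act.flip 1) ((act.flip a) ∘ₗ LinearMap.mulRight k y)
            (Coalgebra.comul x)))) :=
  group_partial_action_gives_hopf_partial_action_general bKG hb_mul hb_one hΔ e he_idem he_central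
    he_one α hα_one hα_range hα_mul hα_ideal hα_comp
end

section
/- Let H be a Hopf algebra over a field k, let B be a (left) H-module algebra with action ▷, and let A ⊆ B be a right ideal of B possessing a unit element 1_A (i.e. 1_A ∈ A and 1_A·a = a·1_A = a for all a ∈ A). Then the map H ⊗ A → A given by h · a = 1_A (h ▷ a) is a partial action of H on A. -/
open TensorProduct

/-! Because `A` is a right ideal containing `e`, every `e * b` lies in `A`, so `e * b * e = e * b`.
Hence multiplying a product `Σ (h₁ ▷ a)(h₂ ▷ b)` on the left by `e` is the same as multiplying
each factor by `e`, which turns the module-algebra axioms for `▷` into those of a partial action. -/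

/-- A (left) `H`-module algebra: a unital `k`-algebra `B` together with a left `H`-module
structure `act : H →ₗ[k] B →ₗ[k] B`, `h ⊗ b ↦ h ▷ b`, such that
`h ▷ (ab) = Σ (h₁ ▷ a)(h₂ ▷ b)` and `h ▷ 1 = ε(h)1`. -/
structure ModuleAlgebra (k H B : Type*) [CommSemiring k] [Semiring H] [HopfAlgebra k H]
    [Semiring B] [Algebra k B] where
  act : H →ₗ[k] B →ₗ[k] B
  one_act : ∀ b : B, act 1 b = b
  mul_act : ∀ (g h : H) (b : B), act (g * h) b = act g (act h b)
  act_mul : ∀ (h : H) (a b : B),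
    act h (a * b) = LinearMap.mul' k B
      (TensorProduct.map (act.flip a) (act.flip b) (Coalgebra.comul h))
  act_one : ∀ h : H, act h 1 = (Coalgebra.counit (R := k) h) • (1 : B)

section LeftCorner

variable {k M N B : Type*} [CommSemiring k] [AddCommMonoid M] [Module k M]
  [AddCommMonoid N] [Module k N] [Semiring B] [Algebra k B]

theorem mul_mul_eq_of_mem_rightIdeal {A : Submodule k B} (hright : ∀ a ∈ A, ∀ b : B, a * b ∈ A)
    {e : B} (he : e ∈ A) (heR : ∀ a ∈ A, a * e = a) (b : B) : e * b * e = e * b :=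
  heR _ (hright e he b)

theorem mul_mul'_map_eq_mul'_map_mulLeft {e : B} (hee : ∀ b, e * b * e = e * b)
    (F : M →ₗ[k] B) (G : N →ₗ[k] B) (x : M ⊗[k] N) :
    e * LinearMap.mul' k B (TensorProduct.map F G x) =
      LinearMap.mul' k B (TensorProduct.map
        (LinearMap.mulLeft k e ∘ₗ F) (LinearMap.mulLeft k e ∘ₗ G) x) := by
  induction x using TensorProduct.induction_on with
  | zero => simp
  | tmul m n =>
    simp only [TensorProduct.map_tmul, LinearMap.mul'_apply, LinearMap.comp_apply,
      LinearMap.mulLeft_apply]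
    rw [← mul_assoc (e * F m), hee, mul_assoc]
  | add x y hx hy => simp only [map_add, mul_add, hx, hy]

end LeftCorner

theorem ModuleAlgebra.act_flip_act {k H B : Type*} [CommSemiring k] [Semiring H]
    [HopfAlgebra k H] [Semiring B] [Algebra k B] (ρ : ModuleAlgebra k H B) (g : H) (a : B) :
    ρ.act.flip (ρ.act g a) = ρ.act.flip a ∘ₗ LinearMap.mulRight k g := by
  ext h
  simp [ρ.mul_act]

/-- if `B` is an `H`-module algebra and `A ⊆ B` is a right ideal possessing
a unit element `e = 1_A`, then `h · a := e(h ▷ a)` is a partial action of `H` on `A`: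
it maps `A` to `A` and satisfies (i) `h·(ab) = Σ (h₁·a)(h₂·b)`, (ii) `1·a = a`,
and (iii) `h·(g·a) = Σ (h₁·e)((h₂g)·a)` for all `a, b ∈ A`. -/
theorem induced_partial_action {k H B : Type*} [Field k] [Ring H] [HopfAlgebra k H]
    [Ring B] [Algebra k B] (ρ : ModuleAlgebra k H B)
    (A : Submodule k B) (hright : ∀ a ∈ A, ∀ b : B, a * b ∈ A)
    (e : B) (he : e ∈ A) (heL : ∀ a ∈ A, e * a = a) (heR : ∀ a ∈ A, a * e = a) :
    -- the partial action maps A into A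
    (∀ (h : H), ∀ a ∈ A, e * ρ.act h a ∈ A) ∧
    -- (ii) 1 · a = a
    (∀ a ∈ A, e * ρ.act 1 a = a) ∧
    -- (i) h · (ab) = Σ (h₁ · a)(h₂ · b)
    (∀ (h : H), ∀ a ∈ A, ∀ b ∈ A, e * ρ.act h (a * b) =
      LinearMap.mul' k B (TensorProduct.map
        ((LinearMap.mulLeft k e) ∘ₗ (ρ.act.flip a))
        ((LinearMap.mulLeft k e) ∘ₗ (ρ.act.flip b)) (Coalgebra.comul h))) ∧
    -- (iii) h · (g · a) = Σ (h₁ · e)((h₂ g) · a)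
    (∀ (h g : H), ∀ a ∈ A, e * ρ.act h (e * ρ.act g a) =
      LinearMap.mul' k B (TensorProduct.map
        ((LinearMap.mulLeft k e) ∘ₗ (ρ.act.flip e))
        (((LinearMap.mulLeft k e) ∘ₗ (ρ.act.flip a)) ∘ₗ LinearMap.mulRight k g)
        (Coalgebra.comul h))) := by
  have hee := mul_mul_eq_of_mem_rightIdeal hright he heR
  refine ⟨fun h a _ => hright e he _, fun a ha => ?_, fun h a _ b _ => ?_, fun h g a _ => ?_⟩
  · rw [ρ.one_act, heL a ha]
  · rw [ρ.act_mul, mul_mul'_map_eq_mul'_map_mulLeft hee]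
  · rw [ρ.act_mul, mul_mul'_map_eq_mul'_map_mulLeft hee, ρ.act_flip_act, LinearMap.comp_assoc]
end

section
/- Let H be a Hopf algebra over a field k, let B be an H-module algebra with action ▷, and let A ⊆ B be a two-sided ideal of B with unit element 1_A (so 1_A is a central idempotent of B). Then the induced partial action h · a = 1_A (h ▷ a) satisfies the additional symmetry condition (iv): h·(g·a) = Σ ((h₍₁₎g)·a)(h₍₂₎·1_A) for all h, g ∈ H and a ∈ A. -/
/-! The unit `e` of a two-sided ideal is central, since `e * b` and `b * e` both equal
`e * b * e`; being also idempotent, `x ↦ e * x` is multiplicative. Hence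
`h·(g·a) = e (h ▷ ((g ▷ a) e)) = Σ e (h₁ ▷ (g ▷ a)) · e (h₂ ▷ e)`, and `h₁ ▷ (g ▷ a) = (h₁g) ▷ a`. -/

open TensorProduct

theorem commute_of_identity_of_ideal {B : Type*} [Semiring B] (A : Set B)
    (hright : ∀ a ∈ A, ∀ b : B, a * b ∈ A) (hleft : ∀ a ∈ A, ∀ b : B, b * a ∈ A)
    (e : B) (he : e ∈ A) (heL : ∀ a ∈ A, e * a = a) (heR : ∀ a ∈ A, a * e = a) (b : B) :
    Commute e b :=
  calc e * b = e * b * e := (heR _ (hright e he b)).symm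
    _ = b * e := by rw [mul_assoc, heL _ (hleft e he b)]

theorem LinearMap.mulLeft_comp_mul'_of_isIdempotentElem {k B : Type*} [CommSemiring k]
    [Semiring B] [Algebra k B] {e : B} (hidem : IsIdempotentElem e)
    (hcomm : ∀ b : B, Commute e b) :
    LinearMap.mulLeft k e ∘ₗ LinearMap.mul' k B =
      LinearMap.mul' k B ∘ₗ TensorProduct.map (LinearMap.mulLeft k e) (LinearMap.mulLeft k e) := by
  refine TensorProduct.ext' fun x y => ?_
  simp only [LinearMap.comp_apply, TensorProduct.map_tmul, LinearMap.mul'_apply,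
    LinearMap.mulLeft_apply]
  calc e * (x * y) = e * e * (x * y) := by rw [hidem.eq]
    _ = e * (x * e) * y := by rw [← (hcomm x).eq]; simp only [mul_assoc]
    _ = e * x * (e * y) := by simp only [mul_assoc]

namespace ModuleAlgebra

variable {k H B : Type*} [CommSemiring k] [Semiring H] [HopfAlgebra k H] [Semiring B]
  [Algebra k B] (ρ : ModuleAlgebra k H B)

theorem flip_act_act (g : H) (a : B) :
    ρ.act.flip (ρ.act g a) = ρ.act.flip a ∘ₗ LinearMap.mulRight k g :=
  LinearMap.ext fun x => (ρ.mul_act x g a).symm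

theorem mulLeft_act_mul {e : B} (hidem : IsIdempotentElem e) (hcomm : ∀ b : B, Commute e b)
    (h : H) (x y : B) :
    e * ρ.act h (x * y) = LinearMap.mul' k B (TensorProduct.map
      (LinearMap.mulLeft k e ∘ₗ ρ.act.flip x) (LinearMap.mulLeft k e ∘ₗ ρ.act.flip y)
      (Coalgebra.comul h)) := by
  rw [ρ.act_mul, TensorProduct.map_comp]
  exact LinearMap.congr_fun (LinearMap.mulLeft_comp_mul'_of_isIdempotentElem hidem hcomm) _

end ModuleAlgebra

/-- if `B` is an `H`-module algebra and `A ⊆ B` is a two-sided ideal with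
unit element `e = 1_A` (a central idempotent of `B`), then the induced partial action
`h · a := e(h ▷ a)` satisfies the symmetry condition
(iv) `h·(g·a) = Σ ((h₁g)·a)(h₂·e)` for all `h, g ∈ H` and `a ∈ A`. -/
theorem induced_partial_action_symmetric {k H B : Type*} [Field k] [Ring H] [HopfAlgebra k H]
    [Ring B] [Algebra k B] (ρ : ModuleAlgebra k H B)
    (A : Submodule k B)
    (hright : ∀ a ∈ A, ∀ b : B, a * b ∈ A) (hleft : ∀ a ∈ A, ∀ b : B, b * a ∈ A)
    (e : B) (he : e ∈ A) (heL : ∀ a ∈ A, e * a = a) (heR : ∀ a ∈ A, a * e = a) :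
    ∀ (h g : H), ∀ a ∈ A, e * ρ.act h (e * ρ.act g a) =
      LinearMap.mul' k B (TensorProduct.map
        (((LinearMap.mulLeft k e) ∘ₗ (ρ.act.flip a)) ∘ₗ LinearMap.mulRight k g)
        ((LinearMap.mulLeft k e) ∘ₗ (ρ.act.flip e))
        (Coalgebra.comul h)) := by
  intro h g a _
  have hcomm := commute_of_identity_of_ideal A hright hleft e he heL heR
  have hidem : IsIdempotentElem e := heL e he
  rw [(hcomm (ρ.act g a)).eq, ρ.mulLeft_act_mul hidem hcomm, ρ.flip_act_act, LinearMap.comp_assoc]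
end

section
/- Let H be a finite-dimensional Hopf algebra over a field k, let t ∈ H be a nonzero left integral, and let A be a unital k-algebra with a symmetric partial action of H such that h·1_A is central in A for every h ∈ H. Then the partial trace map tr : A → A, tr(a) = t·a, takes values in A^{\underline{H}} and is a morphism of A^{\underline{H}}-A^{\underline{H}}-bimodules: tr(ab) = tr(a)b and tr(ba) = b·tr(a) for all a ∈ A, b ∈ A^{\underline{H}}. -/
/-!
Axiom (i) with `b = 1` and axiom (iii) with `g = 1` give the two Sweedler expansions
`h·a = Σ (h₁·a)(h₂·1) = Σ (h₁·1)(h₂·a)`. For an invariant `b` one has `h₂·b = b(h₂·1)`, so these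
expansions turn `h·(ab)` and `h·(ba)` into `(h·a)b` and `b(h·a)`, the former after moving the
central `h₂·1` past `b`; this works for every `h`, not only for `t`. For the invariance of `t·a`,
axiom (iii) and `h₂t = ε(h₂)t` give `h·(t·a) = Σ ε(h₂)(h₁·1)(t·a) = (h·1)(t·a)`, and centrality
moves `h·1` to the right.
-/

open TensorProduct

/-- A partial action of a Hopf algebra `H` on a unital `k`-algebra `A`:
a linear map `act : H →ₗ[k] A →ₗ[k] A`, `h ⊗ a ↦ h · a`, such that
(i) `h·(ab) = Σ (h₁·a)(h₂·b)`, (ii) `1·a = a`, and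
(iii) `h·(g·a) = Σ (h₁·1)((h₂ g)·a)`. -/
structure PartialAction (k H A : Type*) [CommSemiring k] [Semiring H] [HopfAlgebra k H]
    [Semiring A] [Algebra k A] where
  act : H →ₗ[k] A →ₗ[k] A
  one_act : ∀ a : A, act 1 a = a
  act_mul : ∀ (h : H) (a b : A),
    act h (a * b) = LinearMap.mul' k A
      (TensorProduct.map (act.flip a) (act.flip b) (Coalgebra.comul h))
  act_act : ∀ (h g : H) (a : A),
    act h (act g a) = LinearMap.mul' k A
      (TensorProduct.map (act.flip 1) ((act.flip a) ∘ₗ LinearMap.mulRight k g)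
        (Coalgebra.comul h))

open scoped Coalgebra

lemma Coalgebra.sum_counit_right_smul_left {R A : Type*} [CommSemiring R] [AddCommMonoid A]
    [Module R A] [Coalgebra R A] {ι : Type*} {a : A} (𝓡 : Coalgebra.Repr R a ι) :
    ∑ i ∈ 𝓡.index, Coalgebra.counit (R := R) (𝓡.right i) • 𝓡.left i = a := by
  -- plain `TensorProduct.rid` would resolve to `Coalgebra.TensorProduct.rid` here
  simpa only [map_sum, _root_.TensorProduct.rid_tmul, one_smul] using
    congrArg (_root_.TensorProduct.rid R A) (Coalgebra.sum_tmul_counit_eq 𝓡)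

def Bialgebra.IsLeftIntegral (k : Type*) {H : Type*} [CommSemiring k] [Semiring H]
    [Bialgebra k H] (t : H) : Prop :=
  ∀ h : H, h * t = Coalgebra.counit (R := k) h • t

namespace PartialAction

variable {k H A : Type*} [CommSemiring k] [Semiring H] [HopfAlgebra k H] [Semiring A]
  [Algebra k A] (α : PartialAction k H A)

def IsInvariant (b : A) : Prop := ∀ h : H, α.act h b = b * α.act h 1

variable {ι : Type*} {h : H}

lemma act_mul_eq_sum (𝓡 : Coalgebra.Repr k h ι) (a b : A) :
    α.act h (a * b) = ∑ i ∈ 𝓡.index, α.act (𝓡.left i) a * α.act (𝓡.right i) b := by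
  simp [α.act_mul, ← 𝓡.eq, map_sum]

lemma act_act_eq_sum (𝓡 : Coalgebra.Repr k h ι) (g : H) (a : A) :
    α.act h (α.act g a) = ∑ i ∈ 𝓡.index, α.act (𝓡.left i) 1 * α.act (𝓡.right i * g) a := by
  simp [α.act_act, ← 𝓡.eq, map_sum]

lemma act_eq_sum_act_mul_act_one (𝓡 : Coalgebra.Repr k h ι) (a : A) :
    α.act h a = ∑ i ∈ 𝓡.index, α.act (𝓡.left i) a * α.act (𝓡.right i) 1 := by
  simpa using α.act_mul_eq_sum 𝓡 a 1

lemma act_eq_sum_act_one_mul_act (𝓡 : Coalgebra.Repr k h ι) (a : A) :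
    α.act h a = ∑ i ∈ 𝓡.index, α.act (𝓡.left i) 1 * α.act (𝓡.right i) a := by
  simpa [α.one_act] using α.act_act_eq_sum 𝓡 1 a

lemma act_mul_of_isInvariant_left {b : A} (hb : α.IsInvariant b) (h : H) (a : A) :
    α.act h (b * a) = b * α.act h a := by
  rw [α.act_mul_eq_sum (ℛ k h), α.act_eq_sum_act_one_mul_act (ℛ k h), Finset.mul_sum]
  exact Finset.sum_congr rfl fun i _ ↦ by rw [hb, mul_assoc]

lemma act_mul_of_isInvariant_right (hcentral : ∀ (h : H) (a : A), α.act h 1 * a = a * α.act h 1)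
    {b : A} (hb : α.IsInvariant b) (h : H) (a : A) :
    α.act h (a * b) = α.act h a * b := by
  rw [α.act_mul_eq_sum (ℛ k h), α.act_eq_sum_act_mul_act_one (ℛ k h), Finset.sum_mul]
  exact Finset.sum_congr rfl fun i _ ↦ by rw [hb, ← hcentral, mul_assoc]

lemma act_act_of_isLeftIntegral {t : H} (hint : Bialgebra.IsLeftIntegral k t) (h : H) (a : A) :
    α.act h (α.act t a) = α.act h 1 * α.act t a := by
  let 𝓡 := ℛ k h
  let ε : H →ₗ[k] k := Coalgebra.counit
  calc α.act h (α.act t a)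
      = ∑ i ∈ 𝓡.index, ε (𝓡.right i) • (α.act (𝓡.left i) 1 * α.act t a) := by
        simp [α.act_act_eq_sum 𝓡, hint _, ε]
    _ = α.act (∑ i ∈ 𝓡.index, ε (𝓡.right i) • 𝓡.left i) 1 * α.act t a := by
        simp [map_sum, Finset.sum_mul]
    _ = α.act h 1 * α.act t a := by rw [Coalgebra.sum_counit_right_smul_left]

lemma isInvariant_act_of_isLeftIntegral
    (hcentral : ∀ (h : H) (a : A), α.act h 1 * a = a * α.act h 1) {t : H}
    (hint : Bialgebra.IsLeftIntegral k t) (a : A) : α.IsInvariant (α.act t a) :=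
  fun h ↦ (α.act_act_of_isLeftIntegral hint h a).trans (hcentral h _)

end PartialAction

theorem partial_trace_bimodule_map_general {k H A : Type*} [Field k] [Ring H] [HopfAlgebra k H]
    [Ring A] [Algebra k A] (α : PartialAction k H A)
    -- each `h·1` is central in `A`:
    (hcentral : ∀ (h : H) (a : A), (α.act h 1) * a = a * (α.act h 1))
    -- `t` is a nonzero left integral in `H`:
    (t : H) (hint : ∀ h : H, h * t = (Coalgebra.counit (R := k) h) • t) :
    -- `tr` takes values in the partial invariants:
    (∀ a : A, ∀ h : H, α.act h (α.act t a) = (α.act t a) * α.act h 1) ∧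
    -- `tr` is a right `A^{\underline{H}}`-module map:
    (∀ a : A, ∀ b : A, (∀ h : H, α.act h b = b * α.act h 1) →
      α.act t (a * b) = (α.act t a) * b) ∧
    -- `tr` is a left `A^{\underline{H}}`-module map:
    (∀ a : A, ∀ b : A, (∀ h : H, α.act h b = b * α.act h 1) →
      α.act t (b * a) = b * (α.act t a)) :=
  ⟨α.isInvariant_act_of_isLeftIntegral hcentral hint,
    fun a _ hb ↦ α.act_mul_of_isInvariant_right hcentral hb t a,
    fun a _ hb ↦ α.act_mul_of_isInvariant_left hb t a⟩

/-- if `H` is finite-dimensional with nonzero left integral `t`, and the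
partial action of `H` on `A` is symmetric with each `h·1` central in `A`, then the
partial trace `tr(a) = t·a` takes values in `A^{\underline{H}}` and is a morphism of
`A^{\underline{H}}`-bimodules. -/
theorem partial_trace_bimodule_map {k H A : Type*} [Field k] [Ring H] [HopfAlgebra k H]
    [FiniteDimensional k H] [Ring A] [Algebra k A] (α : PartialAction k H A)
    -- the partial action is symmetric:
    (hsymm : ∀ (h g : H) (a : A),
      α.act h (α.act g a) = LinearMap.mul' k A
        (TensorProduct.map ((α.act.flip a) ∘ₗ LinearMap.mulRight k g) (α.act.flip 1)
          (Coalgebra.comul h)))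
    -- each `h·1` is central in `A`:
    (hcentral : ∀ (h : H) (a : A), (α.act h 1) * a = a * (α.act h 1))
    -- `t` is a nonzero left integral in `H`:
    (t : H) (ht : t ≠ 0) (hint : ∀ h : H, h * t = (Coalgebra.counit (R := k) h) • t) :
    -- `tr` takes values in the partial invariants:
    (∀ a : A, ∀ h : H, α.act h (α.act t a) = (α.act t a) * α.act h 1) ∧
    -- `tr` is a right `A^{\underline{H}}`-module map:
    (∀ a : A, ∀ b : A, (∀ h : H, α.act h b = b * α.act h 1) →
      α.act t (a * b) = (α.act t a) * b) ∧
    -- `tr` is a left `A^{\underline{H}}`-module map: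
    (∀ a : A, ∀ b : A, (∀ h : H, α.act h b = b * α.act h 1) →
      α.act t (b * a) = b * (α.act t a)) :=
  partial_trace_bimodule_map_general α hcentral t hint
end

section
/- Let H be a finite-dimensional Hopf algebra with nonzero left integral t, let B be an H-module algebra, A ⊆ B a two-sided ideal with unit 1_A, with the induced partial action h·a = 1_A(h ▷ a). If the partial trace map tr : A → A^{\underline{H}}, tr(a) = t·a, is surjective, then 1_A·B^H = A^{\underline{H}}. -/
open TensorProduct

/-!
If `b` is invariant then `h ▷ (b c) = b (h ▷ c)`, and `e = 1_A` is central in `B` because `A` is a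
two-sided ideal; together these show that `e b` is partially invariant for every invariant `b`.
Conversely, `t ▷ c` is invariant for every `c` since `t` is a left integral, so surjectivity of the
partial trace writes every partial invariant as `e (t ▷ c)`.
-/

namespace ModuleAlgebra

variable {k H B : Type*} [CommSemiring k] [Semiring H] [HopfAlgebra k H] [Semiring B]
  [Algebra k B] (ρ : ModuleAlgebra k H B)

lemma act_mul_of_invariant {b : B}
    (hb : ∀ h : H, ρ.act h b = Coalgebra.counit (R := k) h • b) (h : H) (c : B) :
    ρ.act h (b * c) = b * ρ.act h c := by
  have hflip : ρ.act.flip b = LinearMap.toSpanSingleton k B b ∘ₗ Coalgebra.counit := by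
    ext g
    simp [hb g]
  calc ρ.act h (b * c)
      = LinearMap.mul' k B (map (LinearMap.toSpanSingleton k B b ∘ₗ Coalgebra.counit)
          (ρ.act.flip c) (Coalgebra.comul h)) := by rw [ρ.act_mul, hflip]
    _ = LinearMap.mul' k B (map (LinearMap.toSpanSingleton k B b) (ρ.act.flip c)
          ((Coalgebra.counit (R := k) (A := H)).rTensor H (Coalgebra.comul h))) := by
        rw [LinearMap.map_rTensor]
    _ = b * ρ.act h c := by simp [Coalgebra.rTensor_counit_comul]

lemma unit_mul_act_unit_mul_of_invariant {b e : B}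
    (hb : ∀ h : H, ρ.act h b = Coalgebra.counit (R := k) h • b) (hcomm : Commute e b)
    (hbe : e * b * e = e * b) (h : H) :
    e * ρ.act h (e * b) = e * b * (e * ρ.act h e) := by
  rw [hcomm.eq, ρ.act_mul_of_invariant hb, ← mul_assoc, ← hcomm.eq, ← mul_assoc, hbe]

lemma act_act_integral {t : H} (hint : ∀ h : H, h * t = Coalgebra.counit (R := k) h • t)
    (c : B) (h : H) :
    ρ.act h (ρ.act t c) = Coalgebra.counit (R := k) h • ρ.act t c := by
  rw [← ρ.mul_act, hint h, map_smul, LinearMap.smul_apply]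

end ModuleAlgebra

lemma commute_of_mem_ideal_unit {B : Type*} [Semigroup B] {A : Set B} {e : B}
    (heL : ∀ a ∈ A, e * a = a) (heR : ∀ a ∈ A, a * e = a) {x : B} (hex : e * x ∈ A)
    (hxe : x * e ∈ A) : Commute e x :=
  calc e * x = e * x * e := (heR _ hex).symm
    _ = x * e := by rw [mul_assoc, heL _ hxe]

theorem unit_mul_invariants_eq_partial_invariants_general {k H B : Type*} [Field k] [Ring H]
    [HopfAlgebra k H] [Ring B] [Algebra k B]
    (ρ : ModuleAlgebra k H B)
    (A : Submodule k B)
    (hright : ∀ a ∈ A, ∀ b : B, a * b ∈ A) (hleft : ∀ a ∈ A, ∀ b : B, b * a ∈ A)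
    (e : B) (he : e ∈ A) (heL : ∀ a ∈ A, e * a = a) (heR : ∀ a ∈ A, a * e = a)
    -- `t` is a nonzero left integral
    (t : H) (hint : ∀ h : H, h * t = (Coalgebra.counit (R := k) h) • t)
    -- the partial trace is surjective onto `A^{\underline{H}}`
    (hsurj : ∀ a ∈ A, (∀ h : H, e * ρ.act h a = a * (e * ρ.act h e)) →
      ∃ c ∈ A, e * ρ.act t c = a) :
    {x : B | ∃ b : B, (∀ h : H, ρ.act h b = (Coalgebra.counit (R := k) h) • b) ∧
        x = e * b} =
      {a : B | a ∈ A ∧ ∀ h : H, e * ρ.act h a = a * (e * ρ.act h e)} := by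
  ext x
  constructor
  · rintro ⟨b, hb, rfl⟩
    have heb : e * b ∈ A := hright e he b
    have hcomm : Commute e b :=
      commute_of_mem_ideal_unit (A := A) heL heR heb (hleft e he b)
    exact ⟨heb, ρ.unit_mul_act_unit_mul_of_invariant hb hcomm (heR _ heb)⟩
  · rintro ⟨hxA, hx⟩
    obtain ⟨c, -, hc⟩ := hsurj x hxA hx
    exact ⟨ρ.act t c, ρ.act_act_integral hint c, hc.symm⟩

/-- let `H` be a finite-dimensional Hopf algebra with nonzero left integral
`t`, `B` an `H`-module algebra, `A ⊆ B` a two-sided ideal with unit `e = 1_A`, with induced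
partial action `h·a = e(h ▷ a)`.  If the partial trace `tr(a) = t·a` is surjective onto
`A^{\underline{H}}`, then `e·B^H = A^{\underline{H}}`. -/
theorem unit_mul_invariants_eq_partial_invariants {k H B : Type*} [Field k] [Ring H]
    [HopfAlgebra k H] [FiniteDimensional k H] [Ring B] [Algebra k B]
    (ρ : ModuleAlgebra k H B)
    (A : Submodule k B)
    (hright : ∀ a ∈ A, ∀ b : B, a * b ∈ A) (hleft : ∀ a ∈ A, ∀ b : B, b * a ∈ A)
    (e : B) (he : e ∈ A) (heL : ∀ a ∈ A, e * a = a) (heR : ∀ a ∈ A, a * e = a)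
    -- `t` is a nonzero left integral
    (t : H) (ht : t ≠ 0) (hint : ∀ h : H, h * t = (Coalgebra.counit (R := k) h) • t)
    -- the partial trace is surjective onto `A^{\underline{H}}`
    (hsurj : ∀ a ∈ A, (∀ h : H, e * ρ.act h a = a * (e * ρ.act h e)) →
      ∃ c ∈ A, e * ρ.act t c = a) :
    {x : B | ∃ b : B, (∀ h : H, ρ.act h b = (Coalgebra.counit (R := k) h) • b) ∧
        x = e * b} =
      {a : B | a ∈ A ∧ ∀ h : H, e * ρ.act h a = a * (e * ρ.act h e)} :=
  unit_mul_invariants_eq_partial_invariants_general ρ A hright hleft e he heL heR t hint hsurj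
end

section
/- Let H be a Hopf algebra acting partially on a unital k-algebra A. Then the bilinear multiplication on the vector space A ⊗ H defined by (a ⊗ h)(b ⊗ k) = Σ a(h₍₁₎·b) ⊗ h₍₂₎k is associative, the element e = (1_A ⊗ 1_H) is an idempotent, and the subspace A#H := (A ⊗ H)(1_A ⊗ 1_H), spanned by the elements a#h := Σ a(h₍₁₎·1_A) ⊗ h₍₂₎, is a unital subalgebra with unit 1_A#1_H in which (a#h)(b#k) = Σ a(h₍₁₎·b) # h₍₂₎k. -/
/-!
Write `φ b : H → A` for `h ↦ h · b` and compute in the convolution algebra of linear maps out of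
`H`. Axioms (i) and (iii) say `φ (a * b) = φ a * φ b` and `φ (g · a) = φ 1 * (φ a ∘ (· * g))`;
since `φ b = φ b * φ 1`, the factor `φ 1` is absorbed and `φ (b * (g · c)) = φ b * (φ c ∘ (· * g))`.
Because `(a ⊗ h) y = (a ⊗ 1) * ((1 ⊗ h) y)`, associativity reduces to `a = 1`, i.e. to an identity
of maps `H → A ⊗ H` in `h`. There `h ↦ (1 ⊗ h)(b ⊗ g)` is the convolution, in the algebra `A ⊗ H`,
of `h ↦ (h · b) ⊗ 1` and `h ↦ 1 ⊗ h g`, and the identity follows from the one above together with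
`Δ (h g) = Δ h Δ g`. Everything else holds for any associative product with a left unit `e`.
-/

open TensorProduct

open Coalgebra WithConv LinearMap
open Algebra.TensorProduct (includeLeft includeRight)

section TensorProductAlgebra

variable {k C A B : Type*} [CommSemiring k] [Semiring A] [Algebra k A] [Semiring B] [Algebra k B]

lemma LinearMap.convMul_includeLeft_includeRight [AddCommMonoid C] [Module k C]
    [CoalgebraStruct k C] (F : C →ₗ[k] A) (G : C →ₗ[k] B) :
    (toConv (includeLeft.toLinearMap ∘ₗ F) * toConv (includeRight.toLinearMap ∘ₗ G)).ofConv =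
      map F G ∘ₗ comul := by
  have : mul' k (A ⊗[k] B) ∘ₗ map (includeLeft.toLinearMap ∘ₗ F)
      (includeRight.toLinearMap ∘ₗ G) = map F G :=
    TensorProduct.ext' fun x y => by simp
  rw [LinearMap.convMul_def, ← this, comp_assoc]

lemma LinearMap.convMul_comp_mulRight [Semiring C] [Bialgebra k C] (P Q : WithConv (C →ₗ[k] B))
    (g : C) {ι : Type*} (𝓡 : Coalgebra.Repr k g ι) :
    toConv ((P * Q).ofConv ∘ₗ mulRight k g) = ∑ i ∈ 𝓡.index,
      toConv (P.ofConv ∘ₗ mulRight k (𝓡.left i)) * toConv (Q.ofConv ∘ₗ mulRight k (𝓡.right i)) := by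
  ext h
  simp [Bialgebra.comul_mul, ← 𝓡.eq, ← (ℛ k h).eq, Finset.sum_mul, Finset.mul_sum]

lemma TensorProduct.mulLeft_tmul_one_comp_map {M N : Type*} [AddCommMonoid M]
    [Module k M] [AddCommMonoid N] [Module k N] (a : A) (F : M →ₗ[k] A) (G : N →ₗ[k] B) :
    mulLeft k (a ⊗ₜ[k] (1 : B)) ∘ₗ map F G = map (mulLeft k a ∘ₗ F) G :=
  TensorProduct.ext' fun x y => by simp

end TensorProductAlgebra

section TensorProduct

variable {R M N P : Type*} [CommSemiring R] [AddCommMonoid M] [Module R M] [AddCommMonoid N]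
  [Module R N] [AddCommMonoid P] [Module R P]

lemma LinearMap.range_eq_span_apply_tmul (f : M ⊗[R] N →ₗ[R] P) :
    range f = Submodule.span R {x | ∃ (a : M) (b : N), x = f (a ⊗ₜ[R] b)} := by
  rw [range_eq_map, ← span_tmul_eq_top, Submodule.map_span]
  congr 1
  ext
  simp [eq_comm]

lemma LinearMap.assoc_of_assoc_tmul (m : M ⊗[R] N →ₗ[R] M ⊗[R] N →ₗ[R] M ⊗[R] N)
    (h : ∀ (a b c : M) (p q r : N),
      m (m (a ⊗ₜ p) (b ⊗ₜ q)) (c ⊗ₜ r) = m (a ⊗ₜ p) (m (b ⊗ₜ q) (c ⊗ₜ r)))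
    (x y z : M ⊗[R] N) : m (m x y) z = m x (m y z) := by
  have hx (b c : M) (q r : N) :
      m.flip (c ⊗ₜ r) ∘ₗ m.flip (b ⊗ₜ q) = m.flip (m (b ⊗ₜ q) (c ⊗ₜ r)) :=
    TensorProduct.ext' fun a p => h a b c p q r
  have hy (c : M) (r : N) : m.flip (c ⊗ₜ r) ∘ₗ m x = m x ∘ₗ m.flip (c ⊗ₜ r) :=
    TensorProduct.ext' fun b q => LinearMap.congr_fun (hx b c q r) x
  have hz : m (m x y) = m x ∘ₗ m y :=
    TensorProduct.ext' fun c r => LinearMap.congr_fun (hy c r) y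
  exact LinearMap.congr_fun hz z

end TensorProduct

namespace PartialAction

variable {k H A : Type*} [CommSemiring k] [Semiring H] [HopfAlgebra k H] [Semiring A] [Algebra k A]
  (α : PartialAction k H A)

lemma toConv_flip_mul (a b : A) :
    toConv (α.act.flip (a * b)) = toConv (α.act.flip a) * toConv (α.act.flip b) := by
  ext h
  exact α.act_mul h a b

lemma toConv_flip_act (g : H) (a : A) :
    toConv (α.act.flip (α.act g a)) =
      toConv (α.act.flip 1) * toConv (α.act.flip a ∘ₗ mulRight k g) := by
  ext h
  exact α.act_act h g a

lemma toConv_flip_mul_act (b c : A) (g : H) :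
    toConv (α.act.flip (b * α.act g c)) =
      toConv (α.act.flip b) * toConv (α.act.flip c ∘ₗ mulRight k g) := by
  rw [toConv_flip_mul, toConv_flip_act, ← mul_assoc, ← toConv_flip_mul, mul_one]

/-- `(a ⊗ h)(b ⊗ g) = Σ a (h₁ · b) ⊗ h₂ g` -/
def IsSmashMul (m : A ⊗[k] H →ₗ[k] A ⊗[k] H →ₗ[k] A ⊗[k] H) : Prop :=
  ∀ (a b : A) (h g : H),
    m (a ⊗ₜ[k] h) (b ⊗ₜ[k] g) = map (mulLeft k a ∘ₗ α.act.flip b) (mulRight k g) (comul h)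

namespace IsSmashMul

variable {α} {m : A ⊗[k] H →ₗ[k] A ⊗[k] H →ₗ[k] A ⊗[k] H}

lemma tmul_one_mul (hm : α.IsSmashMul m) (a : A) (x y : A ⊗[k] H) :
    m ((a ⊗ₜ[k] 1) * x) y = (a ⊗ₜ[k] 1) * m x y := by
  induction x using TensorProduct.induction_on with
  | zero => simp
  | add x x' hx hx' => simp only [mul_add, map_add, LinearMap.add_apply, hx, hx']
  | tmul a' h =>
    induction y using TensorProduct.induction_on with
    | zero => simp
    | add y y' hy hy' => simp only [map_add, mul_add, hy, hy']
    | tmul b g =>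
      rw [Algebra.TensorProduct.tmul_mul_tmul, one_mul, hm, hm, ← mulLeft_tmul_one_comp_map,
        ← mulLeft_tmul_one_comp_map]
      simp only [comp_apply, mulLeft_apply, ← mul_assoc, Algebra.TensorProduct.tmul_mul_tmul,
        one_mul]

lemma tmul_mul_eq (hm : α.IsSmashMul m) (a : A) (h : H) (y : A ⊗[k] H) :
    m (a ⊗ₜ[k] h) y = (a ⊗ₜ[k] 1) * m (1 ⊗ₜ[k] h) y := by
  rw [← hm.tmul_one_mul, Algebra.TensorProduct.tmul_mul_tmul, mul_one, one_mul]

lemma flip_tmul_comp_mk_one (hm : α.IsSmashMul m) (b : A) (g : H) :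
    m.flip (b ⊗ₜ[k] g) ∘ₗ TensorProduct.mk k A H 1 =
      map (α.act.flip b) (mulRight k g) ∘ₗ comul := by
  ext h
  simp only [comp_apply, flip_apply, mk_apply]
  rw [hm, mulLeft_one, id_comp]

lemma flip_comp_map_comp_comul (hm : α.IsSmashMul m) (z : A ⊗[k] H) (F : H →ₗ[k] A)
    (G : H →ₗ[k] H) :
    m.flip z ∘ₗ map F G ∘ₗ comul = (toConv (includeLeft.toLinearMap ∘ₗ F) *
      toConv ((m.flip z ∘ₗ TensorProduct.mk k A H 1) ∘ₗ G)).ofConv := by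
  have : m.flip z ∘ₗ map F G = mul' k (A ⊗[k] H) ∘ₗ
      map (includeLeft.toLinearMap ∘ₗ F) ((m.flip z ∘ₗ TensorProduct.mk k A H 1) ∘ₗ G) :=
    TensorProduct.ext' fun x y => by simp [hm.tmul_mul_eq (F x)]
  rw [← comp_assoc, this, LinearMap.convMul_def]
  rfl

lemma flip_mul_tmul_comp_mk_one (hm : α.IsSmashMul m) (b c : A) (g l : H) :
    m.flip (m (b ⊗ₜ[k] g) (c ⊗ₜ[k] l)) ∘ₗ TensorProduct.mk k A H 1 =
      m.flip (c ⊗ₜ[k] l) ∘ₗ m.flip (b ⊗ₜ[k] g) ∘ₗ TensorProduct.mk k A H 1 := by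
  have incL_flip_mul_act (u : H) :
      toConv ((includeLeft : A →ₐ[k] A ⊗[k] H).toLinearMap ∘ₗ α.act.flip (b * α.act u c)) =
        toConv (includeLeft.toLinearMap ∘ₗ α.act.flip b) *
          toConv (includeLeft.toLinearMap ∘ₗ α.act.flip c ∘ₗ mulRight k u) := by
    rw [← toConv_ofConv (_ * _), ← algHom_comp_convMul_distrib, ← toConv_flip_mul_act]
  apply toConv_injective
  let 𝓡 := ℛ k g
  calc toConv (m.flip (m (b ⊗ₜ[k] g) (c ⊗ₜ[k] l)) ∘ₗ TensorProduct.mk k A H 1)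
      = ∑ i ∈ 𝓡.index, toConv (m.flip ((b * α.act (𝓡.left i) c) ⊗ₜ[k] (𝓡.right i * l)) ∘ₗ
          TensorProduct.mk k A H 1) := by
        rw [hm, ← 𝓡.eq]
        ext h
        simp [map_sum, LinearMap.sum_apply]
    _ = ∑ i ∈ 𝓡.index, toConv (includeLeft.toLinearMap ∘ₗ α.act.flip b) *
          (toConv (includeLeft.toLinearMap ∘ₗ α.act.flip c ∘ₗ mulRight k (𝓡.left i)) *
            toConv (includeRight.toLinearMap ∘ₗ mulRight k (𝓡.right i * l))) := by
        simp_rw [hm.flip_tmul_comp_mk_one, ← convMul_includeLeft_includeRight, toConv_ofConv,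
          incL_flip_mul_act, mul_assoc]
    _ = toConv (includeLeft.toLinearMap ∘ₗ α.act.flip b) *
          toConv ((map (α.act.flip c) (mulRight k l) ∘ₗ comul) ∘ₗ mulRight k g) := by
        rw [← convMul_includeLeft_includeRight, convMul_comp_mulRight _ _ g 𝓡, Finset.mul_sum]
        simp [mulRight_mul, comp_assoc]
    _ = _ := by
        rw [hm.flip_tmul_comp_mk_one b g, hm.flip_comp_map_comp_comul, hm.flip_tmul_comp_mk_one,
          toConv_ofConv]

lemma assoc_tmul (hm : α.IsSmashMul m) (a b c : A) (h g l : H) :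
    m (m (a ⊗ₜ[k] h) (b ⊗ₜ[k] g)) (c ⊗ₜ[k] l) = m (a ⊗ₜ[k] h) (m (b ⊗ₜ[k] g) (c ⊗ₜ[k] l)) := by
  rw [hm.tmul_mul_eq a h (b ⊗ₜ g), hm.tmul_one_mul, hm.tmul_mul_eq a h]
  exact congrArg _ (LinearMap.congr_fun (hm.flip_mul_tmul_comp_mk_one b c g l) h).symm

lemma assoc (hm : α.IsSmashMul m) (x y z : A ⊗[k] H) : m (m x y) z = m x (m y z) :=
  m.assoc_of_assoc_tmul hm.assoc_tmul x y z

lemma one_tmul_one_mul (hm : α.IsSmashMul m) (x : A ⊗[k] H) : m (1 ⊗ₜ[k] 1) x = x := by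
  suffices m (1 ⊗ₜ[k] 1) = LinearMap.id from LinearMap.congr_fun this x
  refine TensorProduct.ext' fun b g => ?_
  rw [hm, Bialgebra.comul_one, Algebra.TensorProduct.one_def, map_tmul]
  simp [α.one_act]

end IsSmashMul
end PartialAction

/-- for a partial action of `H` on `A`, the multiplication `m` on `A ⊗ H`
determined by `(a ⊗ h)(b ⊗ g) = Σ a(h₁·b) ⊗ h₂g` is associative, `1_A ⊗ 1_H` is an
idempotent, and the subspace `A#H = (A ⊗ H)(1_A ⊗ 1_H)`, spanned by the elements
`a#h := Σ a(h₁·1) ⊗ h₂`, is a subalgebra with unit `1_A # 1_H = 1_A ⊗ 1_H` in which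
`(a#h)(b#g) = Σ a(h₁·b) # h₂g`. -/
theorem partial_smash_product {k H A : Type*} [Field k] [Ring H] [HopfAlgebra k H]
    [Ring A] [Algebra k A] (α : PartialAction k H A)
    (m : (A ⊗[k] H) →ₗ[k] (A ⊗[k] H) →ₗ[k] (A ⊗[k] H))
    (hm : ∀ (a b : A) (h g : H), m (a ⊗ₜ[k] h) (b ⊗ₜ[k] g) =
      TensorProduct.map ((LinearMap.mulLeft k a) ∘ₗ (α.act.flip b)) (LinearMap.mulRight k g)
        (Coalgebra.comul h)) :
    -- `m` is associative
    (∀ x y z : A ⊗[k] H, m (m x y) z = m x (m y z)) ∧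
    -- `1_A ⊗ 1_H` is an idempotent
    (m ((1 : A) ⊗ₜ[k] (1 : H)) ((1 : A) ⊗ₜ[k] (1 : H)) = (1 : A) ⊗ₜ[k] (1 : H)) ∧
    -- `A#H = (A ⊗ H)(1_A ⊗ 1_H)` is spanned by the elements `a#h`
    (LinearMap.range (m.flip ((1 : A) ⊗ₜ[k] (1 : H))) =
      Submodule.span k {x : A ⊗[k] H | ∃ (a : A) (h : H),
        x = m (a ⊗ₜ[k] h) ((1 : A) ⊗ₜ[k] (1 : H))}) ∧
    -- `A#H` is closed under the multiplication
    (∀ x ∈ LinearMap.range (m.flip ((1 : A) ⊗ₜ[k] (1 : H))),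
      ∀ y ∈ LinearMap.range (m.flip ((1 : A) ⊗ₜ[k] (1 : H))),
        m x y ∈ LinearMap.range (m.flip ((1 : A) ⊗ₜ[k] (1 : H)))) ∧
    -- `1_A # 1_H = 1_A ⊗ 1_H` is a two-sided unit for `A#H`
    (∀ x ∈ LinearMap.range (m.flip ((1 : A) ⊗ₜ[k] (1 : H))),
      m ((1 : A) ⊗ₜ[k] (1 : H)) x = x ∧ m x ((1 : A) ⊗ₜ[k] (1 : H)) = x) ∧
    -- the product formula `(a#h)(b#g) = Σ a(h₁·b) # h₂g`
    (∀ (a b : A) (h g : H),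
      m (m (a ⊗ₜ[k] h) ((1 : A) ⊗ₜ[k] (1 : H))) (m (b ⊗ₜ[k] g) ((1 : A) ⊗ₜ[k] (1 : H))) =
        m (m (a ⊗ₜ[k] h) (b ⊗ₜ[k] g)) ((1 : A) ⊗ₜ[k] (1 : H))) := by
  have smash : α.IsSmashMul m := hm
  have one_left := smash.one_tmul_one_mul
  have assoc := smash.assoc
  refine ⟨assoc, one_left _, range_eq_span_apply_tmul _, ?_, ?_, ?_⟩
  · rintro x - _ ⟨y, rfl⟩
    exact ⟨m x y, assoc x y _⟩
  · rintro _ ⟨x, rfl⟩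
    exact ⟨one_left _, by rw [flip_apply, assoc, one_left]⟩
  · intro a b h g
    rw [assoc, one_left, ← assoc]
end
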